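/- arXiv:1403.6807 — 2 statements merged into one kernel-verified Lean document; each statement's English description precedes it below -/
import Mathlib

section
/- Suppose $U : [a, z] \to \mathbb{R}$ and $\Psi : [a, z] \to [0,1]$ satisfy $(t - v)\Psi(v) \leq U(t) - U(v) \leq (t - v)\Psi(t)$ for all $t, v \in [a, z]$, and $\Psi$ is Riemann integrable. Then $U(t) = U(a) + \int_a^t \Psi(s)\,ds$ for all $t \in [a,z]$ (the envelope/payoff-equivalence formula). -/
open intervalIntegral Set

/-!
Write `G t = U t - ∫ a..t, Ψ`. The sandwich makes `Ψ` monotone, so `∫ v..t, Ψ` lies in the same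
interval `[(t - v) Ψ v, (t - v) Ψ t]` as `U t - U v`; hence `|G t - G v| ≤ (t - v) (Ψ t - Ψ v)`.
Chopping `[v, t]` into pieces of length at most `δ`, these increments telescope to
`|G t - G v| ≤ δ (Ψ t - Ψ v)`, and letting `δ → 0` shows that `G` is constant.
-/

theorem abs_sub_le_mul_sub_of_forall_step {f g : ℝ → ℝ} {s : Set ℝ} (hs : s.OrdConnected)
    {δ : ℝ} (hstep : ∀ v ∈ s, ∀ t ∈ s, v ≤ t → t - v ≤ δ → |f t - f v| ≤ δ * (g t - g v))
    (n : ℕ) : ∀ v ∈ s, ∀ t ∈ s, v ≤ t → t - v ≤ n * δ → |f t - f v| ≤ δ * (g t - g v) := by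
  induction n with
  | zero =>
    intro v _ t _ hvt hlen
    obtain rfl : t = v := by push_cast at hlen; linarith
    simp
  | succ n ih =>
    intro v hv t ht hvt hlen
    push_cast at hlen
    rcases le_or_gt (t - v) δ with hshort | hlong
    · exact hstep v hv t ht hvt hshort
    have hδ : 0 ≤ δ := by
      by_contra! hneg
      nlinarith [show (0 : ℝ) ≤ n by positivity]
    have hc : v + δ ∈ s := hs.out hv ht ⟨by linarith, by linarith⟩
    have hfirst := hstep v hv (v + δ) hc (by linarith) (by linarith)
    have hrest := ih (v + δ) hc t ht (by linarith) (by linarith)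
    calc |f t - f v| ≤ |f t - f (v + δ)| + |f (v + δ) - f v| := abs_sub_le _ _ _
      _ ≤ δ * (g t - g (v + δ)) + δ * (g (v + δ) - g v) := add_le_add hrest hfirst
      _ = δ * (g t - g v) := by ring

theorem eq_of_abs_sub_le_mul_sub_of_monotoneOn {f g : ℝ → ℝ} {s : Set ℝ} (hs : s.OrdConnected)
    (hg : MonotoneOn g s)
    (hfg : ∀ v ∈ s, ∀ t ∈ s, v ≤ t → |f t - f v| ≤ (t - v) * (g t - g v))
    {v t : ℝ} (hv : v ∈ s) (ht : t ∈ s) (hvt : v ≤ t) : f t = f v := by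
  suffices h : ∀ δ > 0, |f t - f v| ≤ δ * (g t - g v) by
    have hlim : Filter.Tendsto (fun δ => δ * (g t - g v)) (nhdsWithin 0 (Ioi 0)) (nhds 0) := by
      simpa using ((continuous_mul_const (g t - g v)).tendsto 0).mono_left nhdsWithin_le_nhds
    have habs : |f t - f v| ≤ 0 :=
      ge_of_tendsto hlim (eventually_nhdsWithin_of_forall fun δ hδ => h δ hδ)
    exact sub_eq_zero.mp (abs_nonpos_iff.mp habs)
  intro δ hδ
  have hstep : ∀ v ∈ s, ∀ t ∈ s, v ≤ t → t - v ≤ δ → |f t - f v| ≤ δ * (g t - g v) :=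
    fun v hv t ht hvt hlen =>
      (hfg v hv t ht hvt).trans
        (mul_le_mul_of_nonneg_right hlen (sub_nonneg.mpr (hg hv ht hvt)))
  obtain ⟨n, hn⟩ := Archimedean.arch (t - v) hδ
  exact abs_sub_le_mul_sub_of_forall_step hs hstep n v hv t ht hvt (by simpa using hn)

theorem MonotoneOn.integral_mem_Icc {Ψ : ℝ → ℝ} {v t : ℝ}
    (hΨ : MonotoneOn Ψ (Icc v t)) (hvt : v ≤ t) :
    ∫ s in v..t, Ψ s ∈ Icc ((t - v) * Ψ v) ((t - v) * Ψ t) := by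
  have hint : IntervalIntegrable Ψ MeasureTheory.volume v t :=
    MonotoneOn.intervalIntegrable (by rwa [uIcc_of_le hvt])
  have hv : v ∈ Icc v t := left_mem_Icc.mpr hvt
  have ht : t ∈ Icc v t := right_mem_Icc.mpr hvt
  constructor
  · simpa [mul_comm] using integral_mono_on hvt intervalIntegrable_const hint
      fun s hs => hΨ hv hs hs.1
  · simpa [mul_comm] using integral_mono_on hvt hint intervalIntegrable_const
      fun s hs => hΨ hs ht hs.2

theorem envelope_formula_general (a z : ℝ) (U Ψ : ℝ → ℝ)
    (hS : ∀ t ∈ Set.Icc a z, ∀ v ∈ Set.Icc a z,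
      (t - v) * Ψ v ≤ U t - U v ∧ U t - U v ≤ (t - v) * Ψ t) :
    ∀ t ∈ Set.Icc a z, U t = U a + ∫ s in a..t, Ψ s := by
  have hmono : MonotoneOn Ψ (Icc a z) := by
    intro v hv t ht hvt
    rcases hvt.eq_or_lt with rfl | hlt
    · rfl
    · obtain ⟨hlow, hhigh⟩ := hS t ht v hv
      nlinarith
  have hint : ∀ t ∈ Icc a z, IntervalIntegrable Ψ MeasureTheory.volume a t := fun t ht =>
    (hmono.mono (by rw [uIcc_of_le ht.1]; exact Icc_subset_Icc_right ht.2)).intervalIntegrable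
  have hincr : ∀ v ∈ Icc a z, ∀ t ∈ Icc a z, v ≤ t →
      |(U t - ∫ s in a..t, Ψ s) - (U v - ∫ s in a..v, Ψ s)| ≤ (t - v) * (Ψ t - Ψ v) := by
    intro v hv t ht hvt
    obtain ⟨hlow, hhigh⟩ := hS t ht v hv
    obtain ⟨hint_low, hint_high⟩ :=
      (hmono.mono (Icc_subset_Icc hv.1 ht.2)).integral_mem_Icc hvt
    rw [sub_sub_sub_comm, integral_interval_sub_left (hint t ht) (hint v hv), abs_le]
    constructor <;> linarith
  intro t ht
  have := eq_of_abs_sub_le_mul_sub_of_monotoneOn ordConnected_Icc hmono hincr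
    (left_mem_Icc.mpr (ht.1.trans ht.2)) ht ht.1
  rw [integral_same] at this
  linarith

/-- Envelope / payoff-equivalence formula. -/
theorem envelope_formula (a z : ℝ) (U Ψ : ℝ → ℝ)
    (hΨ : ∀ s ∈ Set.Icc a z, Ψ s ∈ Set.Icc (0:ℝ) 1)
    (hS : ∀ t ∈ Set.Icc a z, ∀ v ∈ Set.Icc a z,
      (t - v) * Ψ v ≤ U t - U v ∧ U t - U v ≤ (t - v) * Ψ t)
    (hInt : IntervalIntegrable Ψ MeasureTheory.volume a z) :
    ∀ t ∈ Set.Icc a z, U t = U a + ∫ s in a..t, Ψ s :=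
  envelope_formula_general a z U Ψ hS
end

section
/- Let $c > 0$, and for each bidder $i$ let $x_i > 0$ be its throughput and $t_i = c x_i$ its valuation with virtual valuation $w_i = t_i - (1 - F_i(t_i))/p_i(t_i)$, where $(1-F_i(t_i))/p_i(t_i) \geq 0$. Let $j \in \arg\max_i w_i$ and $k \in \arg\max_i x_i$. Then $x_k - \frac{1}{c}\cdot\frac{1 - F_k(c x_k)}{p_k(c x_k)} \leq x_j \leq x_k$. -/
lemma sub_one_div_mul_le_of_mul_sub_le_mul_sub {K : Type*} [Field K] [LinearOrder K]
    [IsStrictOrderedRing K] {c a b g h : K} (hc : 0 < c) (hh : 0 ≤ h)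
    (hab : c * a - g ≤ c * b - h) : a - 1 / c * g ≤ b := by
  calc a - 1 / c * g = (c * a - g) / c := by field_simp
    _ ≤ (c * b) / c := by gcongr; linarith
    _ = b := by field_simp

/-- `g i` stands for `(1 - F_i(t_i))/p_i(t_i)` at `t_i = c * x i`, so that `w i` is the
virtual valuation of bidder `i`. -/
theorem throughput_bound_general (N : ℕ) (c : ℝ) (hc : 0 < c)
    (x g : Fin N → ℝ) (hg : ∀ i, 0 ≤ g i)
    (w : Fin N → ℝ) (hw : ∀ i, w i = c * x i - g i)
    (j k : Fin N)
    (hj : ∀ i, w i ≤ w j) (hk : ∀ i, x i ≤ x k) :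
    x k - (1 / c) * g k ≤ x j ∧ x j ≤ x k := by
  have hwk : c * x k - g k ≤ c * x j - g j := by simpa only [hw] using hj k
  exact ⟨sub_one_div_mul_le_of_mul_sub_le_mul_sub hc (hg j) hwk, hk j⟩

/-- Throughput bound for OAUSA relative to VCG. Here `g i` stands for the
    nonnegative quantity `(1 - F_i(t_i))/p_i(t_i)` evaluated at `t_i = c * x_i`, so that
    the virtual valuation is `w i = c * x i - g i`. -/
theorem throughput_bound (N : ℕ) (c : ℝ) (hc : 0 < c)
    (x g : Fin N → ℝ) (hx : ∀ i, 0 < x i) (hg : ∀ i, 0 ≤ g i)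
    (w : Fin N → ℝ) (hw : ∀ i, w i = c * x i - g i)
    (j k : Fin N)
    (hj : ∀ i, w i ≤ w j) (hk : ∀ i, x i ≤ x k) :
    x k - (1 / c) * g k ≤ x j ∧ x j ≤ x k :=
  throughput_bound_general N c hc x g hg w hw j k hj hk
end
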